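/- Let G and G' be Gauss diagrams such that G' is obtained from G by a sequence of n crossing changes. Then there exist ε₁,…,ε_n ∈ {−1,0,+1} and nonzero integers m₁,…,m_n such that W_G(t) − W_{G'}(t) = ∑_{i=1}^n ε_i (t^{m_i} + t^{−m_i}). -/

import Mathlib

open scoped Classical

/-- A Gauss diagram with `n` chords: the `2n` marked points live on the cyclic group
`ZMod (2*n)` (the oriented circle); each chord `i` is the ordered pair
`(tail i, head i)` of marked points and carries a sign (writhe) `sign i ∈ {+1, -1}`;
all `2n` endpoints are distinct. -/
structure GaussDiagram (n : ℕ) where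
  tail : Fin n → ZMod (2 * n)
  head : Fin n → ZMod (2 * n)
  sign : Fin n → ℤ
  sign_mem : ∀ i, sign i = 1 ∨ sign i = -1
  endpoints_inj : Function.Injective
    (fun p : Fin n × Bool => if p.2 then head p.1 else tail p.1)

namespace GaussDiagram

variable {n : ℕ}

/-- `x` lies on the open arc running in the circle's orientation from `a` to `b`. -/
def arcMem (a b x : ZMod (2 * n)) : Prop :=
  0 < (x - a).val ∧ (x - a).val < (b - a).val

/-- `x` lies on the open oriented arc from the tail to the head of chord `i`. -/
def inArc (G : GaussDiagram n) (i : Fin n) (x : ZMod (2 * n)) : Prop :=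
  arcMem (G.tail i) (G.head i) x

/-- Chords `i` and `j` are linked: exactly one endpoint of `j` lies on the open
oriented arc from the tail to the head of `i`. -/
def linked (G : GaussDiagram n) (i j : Fin n) : Prop :=
  Xor' (G.inArc i (G.tail j)) (G.inArc i (G.head j))

/-- Chord `j` crosses chord `i` from right to left. -/
def crossesRL (G : GaussDiagram n) (i j : Fin n) : Prop :=
  G.linked i j ∧ G.inArc i (G.head j)

/-- Chord `j` crosses chord `i` from left to right. -/
def crossesLR (G : GaussDiagram n) (i j : Fin n) : Prop :=
  G.linked i j ∧ G.inArc i (G.tail j)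

/-- The index of the chord `i`: `Ind(i) = r₊ − r₋ − l₊ + l₋`. -/
noncomputable def ind (G : GaussDiagram n) (i : Fin n) : ℤ :=
  ((Finset.univ.filter fun j => G.crossesRL i j ∧ G.sign j = 1).card : ℤ)
    - ((Finset.univ.filter fun j => G.crossesRL i j ∧ G.sign j = -1).card : ℤ)
    - ((Finset.univ.filter fun j => G.crossesLR i j ∧ G.sign j = 1).card : ℤ)
    + ((Finset.univ.filter fun j => G.crossesLR i j ∧ G.sign j = -1).card : ℤ)

/-- The `k`-th writhe `J_k(G)`: the number of positive chords of index `k` minus the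
number of negative chords of index `k`. -/
noncomputable def J (G : GaussDiagram n) (k : ℤ) : ℤ :=
  ((Finset.univ.filter fun i => G.ind i = k ∧ G.sign i = 1).card : ℤ)
    - ((Finset.univ.filter fun i => G.ind i = k ∧ G.sign i = -1).card : ℤ)

/-- The writhe polynomial `W_G(t) = ∑_{Ind(c) ≠ 0} w(c) t^{Ind(c)} = ∑_{k ≠ 0} J_k(G) t^k`. -/
noncomputable def writhePoly (G : GaussDiagram n) : LaurentPolynomial ℤ :=
  ∑ i ∈ Finset.univ.filter (fun i => G.ind i ≠ 0),
    LaurentPolynomial.C (G.sign i) * LaurentPolynomial.T (G.ind i)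

/-- The odd writhe `J(G) = ∑_{c ∈ Odd(G)} w(c)`. -/
noncomputable def oddWrithe (G : GaussDiagram n) : ℤ :=
  ∑ i ∈ Finset.univ.filter (fun i => Odd (G.ind i)), G.sign i

/-- `G'` is obtained from `G` by a crossing change at the chord `c`: the tail and head
of `c` are interchanged and its sign is negated, all other chords being unchanged. -/
def IsCrossingChangeAt (G G' : GaussDiagram n) (c : Fin n) : Prop :=
  G'.tail c = G.head c ∧ G'.head c = G.tail c ∧ G'.sign c = -G.sign c ∧
    ∀ j : Fin n, j ≠ c →
      G'.tail j = G.tail j ∧ G'.head j = G.head j ∧ G'.sign j = G.sign j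

/-- `G'` is obtained from `G` by a crossing change (at some chord). -/
def IsCrossingChange (G G' : GaussDiagram n) : Prop :=
  ∃ c, IsCrossingChangeAt G G' c

/-- `G'` is obtained from `G` by a sequence of `m` crossing changes. -/
def ChangedBy (m : ℕ) (G G' : GaussDiagram n) : Prop :=
  ∃ f : ℕ → GaussDiagram n, f 0 = G ∧ f m = G' ∧
    ∀ i < m, IsCrossingChange (f i) (f (i + 1))

end GaussDiagram

/-!
A crossing change at `c` reverses the chord and negates its sign. For any other chord `j`,
the chord `c` now crosses `j` from the other side but with the opposite sign, so `Ind(j)` is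
unchanged. The reversed chord's arc is the complementary arc, so every chord linked with `c`
crosses it from the other side and `Ind(c)` is negated. Hence only the term of `c` in `W_G`
changes, by `w(c) (t^k + t^(-k))` with `k = Ind(c)` (by nothing when `k = 0`), and the
differences along a sequence of crossing changes telescope.
-/

namespace GaussDiagram

variable {n : ℕ}

theorem arcMem_swap_iff [NeZero n] {a b x : ZMod (2 * n)} (hab : a ≠ b) (hxa : x ≠ a)
    (hxb : x ≠ b) : arcMem b a x ↔ ¬arcMem a b x := by
  unfold arcMem
  set u := x - a
  set v := b - a
  have hu : u.val ≠ 0 := by simpa [ZMod.val_eq_zero, u, sub_eq_zero] using hxa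
  have hv : v.val ≠ 0 := by simpa [ZMod.val_eq_zero, v, sub_eq_zero] using hab.symm
  have huv : u.val ≠ v.val := fun h => hxb (by simpa [u, v] using ZMod.val_injective _ h)
  have hu' : u.val < 2 * n := ZMod.val_lt u
  have hv' : v.val < 2 * n := ZMod.val_lt v
  have hab' : (a - b).val = 2 * n - v.val := by
    rw [show a - b = -v by ring, ZMod.neg_val, if_neg (by simpa [ZMod.val_eq_zero] using hv)]
  rw [show x - b = u - v by ring, hab']
  rcases le_or_gt v.val u.val with hvu | huv'
  · rw [ZMod.val_sub hvu]
    omega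
  · have hvu : (v - u).val = v.val - u.val := ZMod.val_sub huv'.le
    rw [show u - v = -(v - u) by ring, ZMod.neg_val,
      if_neg (fun h => by rw [h, ZMod.val_zero] at hvu; omega), hvu]
    omega

theorem tail_injective (G : GaussDiagram n) : Function.Injective G.tail :=
  fun i j h => congrArg Prod.fst (G.endpoints_inj (a₁ := (i, false)) (a₂ := (j, false)) h)

theorem head_injective (G : GaussDiagram n) : Function.Injective G.head :=
  fun i j h => congrArg Prod.fst (G.endpoints_inj (a₁ := (i, true)) (a₂ := (j, true)) h)

theorem tail_ne_head (G : GaussDiagram n) (i j : Fin n) : G.tail i ≠ G.head j :=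
  fun h => Bool.false_ne_true
    (congrArg Prod.snd (G.endpoints_inj (a₁ := (i, false)) (a₂ := (j, true)) h))

theorem crossesRL_iff (G : GaussDiagram n) (i k : Fin n) :
    G.crossesRL i k ↔ ¬G.inArc i (G.tail k) ∧ G.inArc i (G.head k) := by
  show Xor _ _ ∧ _ ↔ _
  rw [xor_def]
  tauto

theorem crossesLR_iff (G : GaussDiagram n) (i k : Fin n) :
    G.crossesLR i k ↔ G.inArc i (G.tail k) ∧ ¬G.inArc i (G.head k) := by
  show Xor _ _ ∧ _ ↔ _
  rw [xor_def]
  tauto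

theorem not_inArc_tail (G : GaussDiagram n) (i : Fin n) : ¬G.inArc i (G.tail i) := by
  simp [inArc, arcMem]

theorem not_inArc_head (G : GaussDiagram n) (i : Fin n) : ¬G.inArc i (G.head i) :=
  fun h => lt_irrefl _ h.2

noncomputable def indContribution (G : GaussDiagram n) (i k : Fin n) : ℤ :=
  (if G.crossesRL i k then G.sign k else 0) - (if G.crossesLR i k then G.sign k else 0)

theorem indContribution_self (G : GaussDiagram n) (i : Fin n) : G.indContribution i i = 0 := by
  simp [indContribution, crossesRL_iff, crossesLR_iff, not_inArc_tail, not_inArc_head]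

theorem sum_ite_sign (G : GaussDiagram n) (P : Fin n → Prop) :
    ∑ k, (if P k then G.sign k else 0)
      = ((Finset.univ.filter fun k => P k ∧ G.sign k = 1).card : ℤ)
        - ((Finset.univ.filter fun k => P k ∧ G.sign k = -1).card : ℤ) := by
  rw [← Finset.sum_boole, ← Finset.sum_boole, ← Finset.sum_sub_distrib]
  refine Finset.sum_congr rfl fun k _ => ?_
  rcases G.sign_mem k with h | h <;> by_cases hP : P k <;> simp [h, hP]

theorem ind_eq_sum_indContribution (G : GaussDiagram n) (i : Fin n) :
    G.ind i = ∑ k, G.indContribution i k := by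
  unfold indContribution
  rw [ind, Finset.sum_sub_distrib, sum_ite_sign, sum_ite_sign]
  ring

section IsCrossingChangeAt

variable {G G' : GaussDiagram n} {c : Fin n}

theorem IsCrossingChangeAt.inArc_of_ne (hc : IsCrossingChangeAt G G' c) {j : Fin n}
    (hj : j ≠ c) (x : ZMod (2 * n)) : G'.inArc j x ↔ G.inArc j x := by
  obtain ⟨-, -, -, hother⟩ := hc
  rw [inArc, inArc, (hother j hj).1, (hother j hj).2.1]

theorem IsCrossingChangeAt.inArc_self_iff (hc : IsCrossingChangeAt G G' c) {x : ZMod (2 * n)}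
    (hxt : x ≠ G.tail c) (hxh : x ≠ G.head c) : G'.inArc c x ↔ ¬G.inArc c x := by
  obtain ⟨htc, hhc, -, -⟩ := hc
  have : NeZero n := ⟨c.pos.ne'⟩
  rw [inArc, inArc, htc, hhc]
  exact arcMem_swap_iff (G.tail_ne_head c c) hxt hxh

theorem IsCrossingChangeAt.indContribution_of_ne (hc : IsCrossingChangeAt G G' c) {j : Fin n}
    (hj : j ≠ c) (k : Fin n) : G'.indContribution j k = G.indContribution j k := by
  obtain ⟨htc, hhc, hsc, hother⟩ := id hc
  simp only [indContribution, crossesRL_iff, crossesLR_iff, hc.inArc_of_ne hj]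
  by_cases hk : k = c
  · subst hk
    rw [htc, hhc, hsc]
    by_cases ht : G.inArc j (G.tail k) <;> by_cases hh : G.inArc j (G.head k) <;> simp [ht, hh]
  · rw [(hother k hk).1, (hother k hk).2.1, (hother k hk).2.2]

theorem IsCrossingChangeAt.indContribution_self (hc : IsCrossingChangeAt G G' c) (k : Fin n) :
    G'.indContribution c k = -G.indContribution c k := by
  obtain ⟨-, -, -, hother⟩ := id hc
  by_cases hk : k = c
  · rw [hk, G.indContribution_self, G'.indContribution_self, neg_zero]
  · simp only [indContribution, crossesRL_iff, crossesLR_iff, (hother k hk).1,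
      (hother k hk).2.1, (hother k hk).2.2,
      hc.inArc_self_iff (G.tail_injective.ne hk) (G.tail_ne_head k c),
      hc.inArc_self_iff (G.tail_ne_head c k).symm (G.head_injective.ne hk)]
    by_cases ht : G.inArc c (G.tail k) <;> by_cases hh : G.inArc c (G.head k) <;> simp [ht, hh]

theorem IsCrossingChangeAt.ind_of_ne (hc : IsCrossingChangeAt G G' c) {j : Fin n}
    (hj : j ≠ c) : G'.ind j = G.ind j := by
  simp only [ind_eq_sum_indContribution, hc.indContribution_of_ne hj]

theorem IsCrossingChangeAt.ind_self (hc : IsCrossingChangeAt G G' c) : G'.ind c = -G.ind c := by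
  simp only [ind_eq_sum_indContribution, hc.indContribution_self, Finset.sum_neg_distrib]

theorem IsCrossingChangeAt.writhePoly_sub (hc : IsCrossingChangeAt G G' c) :
    G.writhePoly - G'.writhePoly = if G.ind c = 0 then 0 else
      LaurentPolynomial.C (G.sign c) *
        (LaurentPolynomial.T (G.ind c) + LaurentPolynomial.T (-G.ind c)) := by
  obtain ⟨-, -, hsc, hother⟩ := id hc
  unfold writhePoly
  rw [Finset.sum_filter, Finset.sum_filter, ← Finset.sum_sub_distrib,
    Finset.sum_eq_single c (fun j _ hj => by rw [hc.ind_of_ne hj, (hother j hj).2.2, sub_self])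
      (fun h => absurd (Finset.mem_univ c) h),
    hc.ind_self, hsc]
  by_cases h0 : G.ind c = 0
  · simp [h0]
  · simp only [ne_eq, neg_eq_zero, h0, not_false_eq_true, if_true, if_false, map_neg, neg_mul,
      sub_neg_eq_add, mul_add]

end IsCrossingChangeAt

theorem IsCrossingChange.exists_writhePoly_sub {G G' : GaussDiagram n}
    (h : IsCrossingChange G G') :
    ∃ ε μ : ℤ, (ε = -1 ∨ ε = 0 ∨ ε = 1) ∧ μ ≠ 0 ∧
      G.writhePoly - G'.writhePoly
        = LaurentPolynomial.C ε * (LaurentPolynomial.T μ + LaurentPolynomial.T (-μ)) := by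
  obtain ⟨c, hc⟩ := h
  rw [hc.writhePoly_sub]
  split_ifs with h0
  · exact ⟨0, 1, by simp, one_ne_zero, by simp⟩
  · exact ⟨G.sign c, G.ind c, by rcases G.sign_mem c with hs | hs <;> simp [hs], h0, rfl⟩

end GaussDiagram

/-- if `G'` is obtained from `G` by a sequence of `m` crossing changes, then
`W_G(t) − W_{G'}(t) = ∑_{i=1}^m ε_i (t^{m_i} + t^{−m_i})` for some
`ε_i ∈ {−1, 0, +1}` and nonzero integers `m_i`. -/
theorem writhePoly_changedBy {n : ℕ} (m : ℕ) (G G' : GaussDiagram n)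
    (h : GaussDiagram.ChangedBy m G G') :
    ∃ ε μ : Fin m → ℤ, (∀ i, ε i = -1 ∨ ε i = 0 ∨ ε i = 1) ∧ (∀ i, μ i ≠ 0) ∧
      G.writhePoly - G'.writhePoly =
        ∑ i : Fin m,
          LaurentPolynomial.C (ε i) *
            (LaurentPolynomial.T (μ i) + LaurentPolynomial.T (-μ i)) := by
  obtain ⟨f, rfl, rfl, hstep⟩ := h
  choose ε μ hε hμ hW using fun i : Fin m => (hstep i i.isLt).exists_writhePoly_sub
  refine ⟨ε, μ, hε, hμ, ?_⟩
  rw [← Finset.sum_range_sub' (fun i => (f i).writhePoly),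
    Finset.sum_range (fun i => (f i).writhePoly - (f (i + 1)).writhePoly)]
  exact Finset.sum_congr rfl fun i _ => hW i
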